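/- For every sequence S over F_q and every N ≥ 2, the N-th expansion complexity satisfies E_N(S) ≤ min{⌊(N+3)/2⌋, N − 1}. -/

import Mathlib

/-- The `N`-th linear complexity of a sequence `s` over a field: the length of a
shortest linear recurrence satisfied by the first `N` terms. -/
noncomputable def linComplexityN {F : Type*} [Field F] (s : ℕ → F) (N : ℕ) : ℕ :=
  sInf {L | ∃ c : Fin L → F, ∀ i, i + L < N →
    s (i + L) + ∑ ℓ : Fin L, c ℓ * s (i + ℓ.1) = 0}

open Classical in
/-- The `N`-th expansion complexity of a sequence `s` over a field: `0` if the first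
`N` terms vanish, otherwise the least total degree of a nonzero bivariate polynomial
`h(x,y)` with `h(x, G(x)) ≡ 0 mod x^N`, where `G` is the generating function of `s`. -/
noncomputable def expComplexityN {F : Type*} [Field F] (s : ℕ → F) (N : ℕ) : ℕ :=
  if ∀ i < N, s i = 0 then 0 else
  sInf {d | ∃ h : MvPolynomial (Fin 2) F, h ≠ 0 ∧ h.totalDegree = d ∧
    (PowerSeries.X : PowerSeries F) ^ N ∣
      MvPolynomial.aeval ![(PowerSeries.X : PowerSeries F), PowerSeries.mk s] h}

/-!
Padé approximation: a polynomial `h(x, y) = a(x) + y b(x)` with `deg a ≤ d` and `deg b < d`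
has `2d + 1` coefficients, and `h(x, G(x)) ≡ 0 mod x^N` is a system of `N` homogeneous linear
equations in them. For `d = ⌊(N + 1)/2⌋` there are more unknowns than equations, so a nonzero
solution exists, and its total degree `d` is at most `min(⌊(N + 3)/2⌋, N - 1)` once `N ≥ 2`.
-/

open Polynomial Module

section
variable {R : Type*} [CommSemiring R]

theorem Polynomial.aeval_powerSeriesX_eq_coe (p : R[X]) :
    aeval (PowerSeries.X : PowerSeries R) p = p := by
  induction p using Polynomial.induction_on' <;> simp_all [PowerSeries.monomial_eq_C_mul_X_pow]

theorem Polynomial.totalDegree_toMvPolynomial_le {σ : Type*} (p : R[X]) (i : σ) :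
    (p.toMvPolynomial i).totalDegree ≤ p.natDegree := by
  conv_lhs => rw [p.as_sum_range_C_mul_X_pow]
  simp only [map_sum, map_mul, toMvPolynomial_C, map_pow, toMvPolynomial_X,
    MvPolynomial.C_mul_X_pow_eq_monomial]
  refine (MvPolynomial.totalDegree_finsetSum _ _).trans (Finset.sup_le fun k hk => ?_)
  refine (MvPolynomial.totalDegree_monomial_le _ _).trans ?_
  simpa [Nat.lt_succ_iff] using hk

noncomputable def linearInY (a b : R[X]) : MvPolynomial (Fin 2) R :=
  a.toMvPolynomial 0 + MvPolynomial.X 1 * b.toMvPolynomial 0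

theorem aeval_linearInY {A : Type*} [CommSemiring A] [Algebra R A] (a b : R[X]) (x y : A) :
    MvPolynomial.aeval ![x, y] (linearInY a b) = aeval x a + y * aeval x b := by
  simp [linearInY]

theorem linearInY_eq_zero_iff {a b : R[X]} : linearInY a b = 0 ↔ a = 0 ∧ b = 0 := by
  refine ⟨fun h => ?_, fun ⟨ha, hb⟩ => by simp [linearInY, ha, hb]⟩
  have h0 := congrArg (MvPolynomial.aeval ![(X : R[X]), 0]) h
  have h1 := congrArg (MvPolynomial.aeval ![(X : R[X]), 1]) h
  simp only [aeval_linearInY, aeval_X_left_apply, map_zero] at h0 h1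
  simp_all

theorem totalDegree_linearInY_le {a b : R[X]} {d : ℕ} (ha : a.degree ≤ d) (hb : b.degree < d) :
    (linearInY a b).totalDegree ≤ d := by
  refine (MvPolynomial.totalDegree_add _ _).trans (max_le ?_ ?_)
  · exact (a.totalDegree_toMvPolynomial_le 0).trans (natDegree_le_iff_degree_le.2 ha)
  · rcases eq_or_ne b 0 with rfl | hb0
    · simp
    have : Nontrivial R := Polynomial.nontrivial_iff.1 (nontrivial_of_ne b 0 hb0)
    have hb' : b.natDegree < d := (natDegree_lt_iff_degree_lt hb0).2 hb
    calc (MvPolynomial.X 1 * b.toMvPolynomial (0 : Fin 2)).totalDegree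
        ≤ (MvPolynomial.X 1 : MvPolynomial (Fin 2) R).totalDegree
          + (b.toMvPolynomial (0 : Fin 2)).totalDegree := MvPolynomial.totalDegree_mul _ _
      _ ≤ 1 + b.natDegree := by
        rw [MvPolynomial.totalDegree_X]
        exact Nat.add_le_add_left (b.totalDegree_toMvPolynomial_le 0) 1
      _ ≤ d := by omega

end

theorem PowerSeries.exists_pade_approximant {F : Type*} [Field F] (G : PowerSeries F)
    {m n N : ℕ} (hN : N < m + n) :
    ∃ a ∈ degreeLT F m, ∃ b ∈ degreeLT F n, (a ≠ 0 ∨ b ≠ 0) ∧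
      PowerSeries.X ^ N ∣ (a : PowerSeries F) + G * (b : PowerSeries F) := by
  let coe : F[X] →ₗ[F] PowerSeries F := (coeToPowerSeries.algHom F).toLinearMap
  let residual : degreeLT F m × degreeLT F n →ₗ[F] PowerSeries F :=
    (coe ∘ₗ (degreeLT F m).subtype).coprod
      (LinearMap.mulLeft F G ∘ₗ coe ∘ₗ (degreeLT F n).subtype)
  let f : degreeLT F m × degreeLT F n →ₗ[F] Fin N → F :=
    LinearMap.pi fun i => PowerSeries.coeff i ∘ₗ residual
  have : FiniteDimensional F (degreeLT F m) := (degreeLTEquiv F m).symm.finiteDimensional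
  have : FiniteDimensional F (degreeLT F n) := (degreeLTEquiv F n).symm.finiteDimensional
  have hdim : finrank F (Fin N → F) < finrank F (degreeLT F m × degreeLT F n) := by
    rwa [finrank_prod, (degreeLTEquiv F m).finrank_eq, (degreeLTEquiv F n).finrank_eq,
      finrank_fin_fun, finrank_fin_fun, finrank_fin_fun]
  obtain ⟨⟨⟨a, ha⟩, ⟨b, hb⟩⟩, hker, hne⟩ :=
    (Submodule.ne_bot_iff _).1 (LinearMap.ker_ne_bot_of_finrank_lt (f := f) hdim)
  refine ⟨a, ha, b, hb, ?_, PowerSeries.X_pow_dvd_iff.2 fun i hi => ?_⟩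
  · contrapose! hne
    simp [hne]
  · simpa [f, residual, coe] using congrFun hker ⟨i, hi⟩

theorem expComplexityN_le_totalDegree {F : Type*} [Field F] (s : ℕ → F) (N : ℕ)
    {h : MvPolynomial (Fin 2) F} (hne : h ≠ 0)
    (hdvd : PowerSeries.X ^ N ∣ MvPolynomial.aeval ![PowerSeries.X, PowerSeries.mk s] h) :
    expComplexityN s N ≤ h.totalDegree := by
  unfold expComplexityN
  split_ifs
  · exact Nat.zero_le _
  · exact Nat.sInf_le ⟨h, hne, rfl, hdvd⟩

theorem expComplexityN_trivial_upper_bound_general {F : Type*} [Field F]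
    (s : ℕ → F) (N : ℕ) (hN : 2 ≤ N) :
    expComplexityN s N ≤ min ((N + 3) / 2) (N - 1) := by
  set d := (N + 1) / 2
  obtain ⟨a, ha, b, hb, hab, hdvd⟩ :=
    (PowerSeries.mk s).exists_pade_approximant (N := N) (m := d + 1) (n := d) (by omega)
  have hne : linearInY a b ≠ 0 := by
    simpa [linearInY_eq_zero_iff, or_iff_not_and_not] using hab
  have hvanish : PowerSeries.X ^ N ∣
      MvPolynomial.aeval ![PowerSeries.X, PowerSeries.mk s] (linearInY a b) := by
    simpa [aeval_linearInY, aeval_powerSeriesX_eq_coe] using hdvd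
  calc expComplexityN s N ≤ (linearInY a b).totalDegree :=
        expComplexityN_le_totalDegree s N hne hvanish
    _ ≤ d := totalDegree_linearInY_le
        (mem_degreeLE.1 (degreeLT_succ_eq_degreeLE.le ha)) (mem_degreeLT.1 hb)
    _ ≤ min ((N + 3) / 2) (N - 1) := by omega

theorem expComplexityN_trivial_upper_bound {F : Type*} [Field F] [Fintype F]
    (s : ℕ → F) (N : ℕ) (hN : 2 ≤ N) :
    expComplexityN s N ≤ min ((N + 3) / 2) (N - 1) :=
  expComplexityN_trivial_upper_bound_general s N hN
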